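/- Let V ⊂ ℤ^d be finite with 0 ∈ V and let σ : V → ℕ be an active configuration. Then for every realization of the instruction stacks, ACh(σ, V) ≤ J_0(m_S) − J_0(m_{W,0}), where m_S is the strong stabilizing odometer of σ on V with respect to the origin, m_{W,0} is the odometer of the initial weak stabilization of σ on V with respect to the origin, ACh := max(Ch − 1, 0) is the number of additional jump-out iterations, and for an odometer m, J_0(m) counts the pairs (x, ℓ) with x ~ 0 and ℓ < m(x) such that instruction I_x(ℓ) is a jump to 0. -/

import Mathlib

/-!
Site-wise (Diaconis–Fulton) representation of Activated Random Walk,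
following Rolla's survey and the paper
"The critical density of activated random walk is mean field in high dimension".
-/

open MeasureTheory ProbabilityTheory Filter
open scoped ENNReal

namespace ARW

/-- An instruction on a stack: either a sleep instruction, or a jump instruction
labelled by a jump direction `l : L`. -/
inductive Instr (L : Type) : Type
  | sleep : Instr L
  | jump (l : L) : Instr L
  deriving DecidableEq

instance (L : Type) : MeasurableSpace (Instr L) := ⊤

/-- The state of a single site: `num n` means `n` active particles (and no sleeping
particle), `sleepy` means a single sleeping particle.  This realizes `ℕ ∪ {𝔰}`. -/
inductive SiteState : Type
  | num (n : ℕ) : SiteState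
  | sleepy : SiteState
  deriving DecidableEq

instance : Inhabited SiteState := ⟨.num 0⟩
instance : MeasurableSpace SiteState := ⊤

/-- Total number of particles at a site (`|𝔰| = 1`). -/
def SiteState.count : SiteState → ℕ
  | .num n => n
  | .sleepy => 1

/-- Number of *active* particles at a site. -/
def SiteState.numActive : SiteState → ℕ
  | .num n => n
  | .sleepy => 0

/-- Add one active particle to a site, waking a sleeping particle if present. -/
def SiteState.addActive : SiteState → SiteState
  | .num n => .num (n + 1)
  | .sleepy => .num 2

variable {X L : Type}

/-- Instruction stacks: an instruction for every site and stack position. -/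
abbrev Stacks (X L : Type) := X → ℕ → Instr L

/-- A particle configuration `X → ℕ ∪ {𝔰}`. -/
abbrev Config (X : Type) := X → SiteState

/-- A state of the system: a configuration together with an odometer. -/
abbrev ARWState (X : Type) := Config X × (X → ℕ)

/-- The all-active configuration associated to `σ : X → ℕ`. -/
def activeConfig (σ : X → ℕ) : Config X := fun x => .num (σ x)

/-- Topple site `x` (in `V`, with particles jumping out of `V` killed):
apply the next unused instruction of the stack at `x` and increment the odometer there.
A sleep instruction puts a lone (possibly just woken) particle to sleep and has no
effect when two or more particles are present; a jump instruction moves one particle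
(waking it first if it was sleeping) to the target site, waking any sleeping particle
there. -/
def toppleAt [DecidableEq X] (tgt : X → L → X) (V : Finset X) (I : Stacks X L)
    (x : X) (s : ARWState X) : ARWState X :=
  let σ := s.1
  let σ₁ : Config X :=
    match I x (s.2 x) with
    | .sleep => if σ x = .num 1 then Function.update σ x .sleepy else σ
    | .jump l =>
        let y := tgt x l
        let σ' := Function.update σ x (.num ((σ x).count - 1))
        if y ∈ V then Function.update σ' y ((σ' y).addActive) else σ'
  (σ₁, Function.update s.2 x (s.2 x + 1))

/-- Eligibility predicate for ordinary toppling: the site is unstable,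
i.e. holds at least one active particle. -/
def unstableElig : X → SiteState → Prop := fun _ st => 1 ≤ st.numActive

/-- Eligibility predicate for weak toppling with respect to `U`: sites of `U` are
weakly unstable when they hold at least two active particles; other sites are
weakly unstable iff unstable. -/
def weakElig [DecidableEq X] (U : Finset X) : X → SiteState → Prop :=
  fun x st => if x ∈ U then 2 ≤ st.numActive else 1 ≤ st.numActive

/-- Eligibility predicate for acceptable toppling: the site is nonempty. -/
def accElig : X → SiteState → Prop := fun _ st => 1 ≤ st.count

/-- One toppling step at some site of `V` that is eligible according to `elig`. -/
def ToppleStep [DecidableEq X] (tgt : X → L → X) (V : Finset X) (I : Stacks X L)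
    (elig : X → SiteState → Prop) (s t : ARWState X) : Prop :=
  ∃ x ∈ V, elig x (s.1 x) ∧ t = toppleAt tgt V I x s

/-- Reachability by finitely many topplings of `elig`-eligible sites of `V`. -/
abbrev Reach [DecidableEq X] (tgt : X → L → X) (V : Finset X) (I : Stacks X L)
    (elig : X → SiteState → Prop) : ARWState X → ARWState X → Prop :=
  Relation.ReflTransGen (ToppleStep tgt V I elig)

/-- A configuration is stable in `V` if no site of `V` holds an active particle. -/
def IsStable (V : Finset X) (σ : Config X) : Prop := ∀ x ∈ V, (σ x).numActive = 0

/-- A configuration is weakly stable in `V` w.r.t. `U` if no site of `V` is weakly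
unstable (sites of `U` may hold a single active particle). -/
def IsWeaklyStable [DecidableEq X] (V U : Finset X) (σ : Config X) : Prop :=
  ∀ x ∈ V, ¬ weakElig U x (σ x)

/-- The stabilization of the state `s` in `V`: the state reached from `s` by
toppling unstable sites of `V` until none remain.  (By the abelian property this
state is unique whenever it exists; `Classical.epsilon` selects it.)
Its first component is `Stab_V`, its second component is the odometer `Odom_V`. -/
noncomputable def stabState [DecidableEq X] (tgt : X → L → X) (V : Finset X)
    (I : Stacks X L) (s : ARWState X) : ARWState X :=
  Classical.epsilon fun t => Reach tgt V I unstableElig s t ∧ IsStable V t.1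

/-- The weak stabilization of the state `s` in `V` with respect to `U`. -/
noncomputable def weakStabState [DecidableEq X] (tgt : X → L → X) (V U : Finset X)
    (I : Stacks X L) (s : ARWState X) : ARWState X :=
  Classical.epsilon fun t => Reach tgt V I (weakElig U) s t ∧ IsWeaklyStable V U t.1

/-- The instruction stacks `I` admit weak stabilization on `V` w.r.t. `U` from every
state (this holds almost surely). -/
def WeakStabilizable [DecidableEq X] (tgt : X → L → X) (V U : Finset X)
    (I : Stacks X L) : Prop :=
  ∀ s : ARWState X, ∃ t, Reach tgt V I (weakElig U) s t ∧ IsWeaklyStable V U t.1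

/-- The jump-out step at the origin `o`: acceptably topple the particle at `o`
(using the sleep instructions encountered, which put it to sleep and wake it again)
until it jumps out of `o`. -/
noncomputable def jumpOut [DecidableEq X] (tgt : X → L → X) (o : X) (V : Finset X)
    (I : Stacks X L) (s : ARWState X) : ARWState X :=
  let ℓ := sInf {k | s.2 o ≤ k ∧ I o k ≠ Instr.sleep}
  toppleAt tgt V I o (s.1, Function.update s.2 o ℓ)

/-- The strong stabilization procedure started from `s0`: first weakly stabilize
w.r.t. `o` (the pre-step, index `0`), then repeatedly jump the particle out of the
origin and weakly stabilize again, stopping when the origin is empty. -/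
noncomputable def strongSeq [DecidableEq X] (tgt : X → L → X) (o : X) (V : Finset X)
    (I : Stacks X L) (s0 : ARWState X) : ℕ → ARWState X
  | 0 => weakStabState tgt V {o} I s0
  | k + 1 =>
      if ((strongSeq tgt o V I s0 k).1 o).count = 0 then strongSeq tgt o V I s0 k
      else weakStabState tgt V {o} I (jumpOut tgt o V I (strongSeq tgt o V I s0 k))

/-- `Ch`: the number of completed jump-out iterations in the strong stabilization
of the configuration `σ0` on `V` with respect to the origin `o`. -/
noncomputable def Ch [DecidableEq X] (tgt : X → L → X) (o : X) (V : Finset X)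
    (I : Stacks X L) (σ0 : Config X) : ℕ :=
  sInf {k | ((strongSeq tgt o V I (σ0, fun _ => 0) k).1 o).count = 0}

/-- `ACh = max (Ch - 1) 0`: the number of additional chances. -/
noncomputable def ACh [DecidableEq X] (tgt : X → L → X) (o : X) (V : Finset X)
    (I : Stacks X L) (σ0 : Config X) : ℕ :=
  Ch tgt o V I σ0 - 1

/-- The strong stabilizing odometer: the odometer at the end of the strong
stabilization procedure. -/
noncomputable def strongOdom [DecidableEq X] (tgt : X → L → X) (o : X) (V : Finset X)
    (I : Stacks X L) (σ0 : Config X) : X → ℕ :=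
  (strongSeq tgt o V I (σ0, fun _ => 0) (Ch tgt o V I σ0)).2

/-- The odometer of the initial weak stabilization (pre-step). -/
noncomputable def weakOdom0 [DecidableEq X] (tgt : X → L → X) (o : X) (V : Finset X)
    (I : Stacks X L) (σ0 : Config X) : X → ℕ :=
  (strongSeq tgt o V I (σ0, fun _ => 0) 0).2

/-- The number of closed walks of length `n` from `o` to `o` in the graph whose steps
are given by `tgt`. -/
noncomputable def closedWalkCount (tgt : X → L → X) (o : X) (n : ℕ) : ℕ :=
  Nat.card {f : Fin n → L // (List.ofFn f).foldl tgt o = o}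

/-- The expected number of returns to `o` of the simple random walk (uniform steps
in `L`): `E[R] = ∑_{n ≥ 1} P(S_n = o)`, valued in `ℝ≥0∞`. -/
noncomputable def expReturns [Fintype L] (tgt : X → L → X) (o : X) : ℝ≥0∞ :=
  ∑' n : ℕ, (closedWalkCount tgt o (n + 1) : ℝ≥0∞) / (Fintype.card L : ℝ≥0∞) ^ (n + 1)

/-- `I` is a family of i.i.d. ARW instruction stacks with sleep rate `lam` on the
probability space `(Ω, P)`: the entries are jointly independent, each entry is a
sleep instruction with probability `p_𝔰 = lam/(1+lam)` and any given jump instruction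
with probability `p_j/deg` where `p_j = 1 - p_𝔰` and `deg = |L|`. -/
structure IsARWStacks [Fintype L] (lam : ℝ) {Ω : Type} [MeasurableSpace Ω]
    (P : Measure Ω) (I : Ω → Stacks X L) : Prop where
  meas : ∀ x k, Measurable fun ω => I ω x k
  indep : iIndepFun (fun (p : X × ℕ) ω => I ω p.1 p.2) P
  sleep_prob : ∀ x k, P {ω | I ω x k = Instr.sleep} = ENNReal.ofReal (lam / (1 + lam))
  jump_prob : ∀ x k l, P {ω | I ω x k = Instr.jump l}
      = ENNReal.ofReal ((1 - lam / (1 + lam)) / (Fintype.card L : ℝ))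

/-- The full odometer `m_σ(x)` of the system on the whole (infinite) graph: the
supremum over finite `V` of the stabilizing odometers (these are nondecreasing
in `V`). -/
noncomputable def mOdomGen [DecidableEq X] (tgt : X → L → X) (I : Stacks X L)
    (σ0 : Config X) (x : X) : ℕ∞ :=
  ⨆ V : Finset X, ((stabState tgt V I (σ0, fun _ => 0)).2 x : ℕ∞)

/-! ### The lattice `ℤ^d` -/

/-- Sites of `ℤ^d`. -/
abbrev SiteZ (d : ℕ) := Fin d → ℤ

/-- Jump directions in `ℤ^d`: a coordinate and a sign (`2d` of them). -/
abbrev Dir (d : ℕ) := Fin d × Bool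

/-- The unit step in direction `p`. -/
def stepDir (d : ℕ) (p : Dir d) : SiteZ d :=
  Pi.single p.1 (if p.2 then (1 : ℤ) else -1)

/-- Nearest-neighbour jumps on `ℤ^d`. -/
def tgtZ (d : ℕ) : SiteZ d → Dir d → SiteZ d := fun x p => x + stepDir d p

/-- The origin of `ℤ^d`. -/
def originZ (d : ℕ) : SiteZ d := 0

/-- The box `V_n = {-n, …, n}^d`. -/
noncomputable def BoxZ (d : ℕ) (n : ℕ) : Finset (SiteZ d) :=
  Finset.Icc (fun _ => -(n : ℤ)) (fun _ => (n : ℤ))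

/-- The ball `B₁`: the origin together with its `2d` neighbours. -/
def ballOneZ (d : ℕ) : Finset (SiteZ d) :=
  insert (originZ d) (Finset.univ.image (stepDir d))

/-- `Stab_V σ` on `ℤ^d` (started from the zero odometer). -/
noncomputable def StabZ (d : ℕ) (V : Finset (SiteZ d)) (I : Stacks (SiteZ d) (Dir d))
    (σ0 : Config (SiteZ d)) : Config (SiteZ d) :=
  (stabState (tgtZ d) V I (σ0, fun _ => 0)).1

/-- `Ch(σ, V)` on `ℤ^d`, w.r.t. the origin. -/
noncomputable def ChZ (d : ℕ) (V : Finset (SiteZ d)) (I : Stacks (SiteZ d) (Dir d))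
    (σ0 : Config (SiteZ d)) : ℕ :=
  Ch (tgtZ d) (originZ d) V I σ0

/-- `ACh(σ, V) = max(Ch - 1, 0)` on `ℤ^d`. -/
noncomputable def AChZ (d : ℕ) (V : Finset (SiteZ d)) (I : Stacks (SiteZ d) (Dir d))
    (σ0 : Config (SiteZ d)) : ℕ :=
  ACh (tgtZ d) (originZ d) V I σ0

/-- Strong stabilizing odometer on `ℤ^d`. -/
noncomputable def strongOdomZ (d : ℕ) (V : Finset (SiteZ d))
    (I : Stacks (SiteZ d) (Dir d)) (σ0 : Config (SiteZ d)) : SiteZ d → ℕ :=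
  strongOdom (tgtZ d) (originZ d) V I σ0

/-- Odometer of the initial weak stabilization on `ℤ^d`. -/
noncomputable def weakOdom0Z (d : ℕ) (V : Finset (SiteZ d))
    (I : Stacks (SiteZ d) (Dir d)) (σ0 : Config (SiteZ d)) : SiteZ d → ℕ :=
  weakOdom0 (tgtZ d) (originZ d) V I σ0

/-- `J₀(m)`: the number of pairs `(x, ℓ)` with `x ∼ 0`, `ℓ < m x`, such that the
instruction `I x ℓ` is a jump to the origin. -/
noncomputable def J0Z (d : ℕ) (I : Stacks (SiteZ d) (Dir d)) (m : SiteZ d → ℕ) : ℕ :=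
  ∑ p : Dir d,
    ((Finset.range (m (stepDir d p))).filter
      fun ℓ => I (stepDir d p) ℓ = Instr.jump (p.1, !p.2)).card

/-- The full odometer `m_σ` on `ℤ^d`, as the nondecreasing limit of the stabilizing
odometers over the boxes `V_n`. -/
noncomputable def mOdomZ (d : ℕ) (I : Stacks (SiteZ d) (Dir d)) (σ0 : Config (SiteZ d))
    (x : SiteZ d) : ℕ∞ :=
  ⨆ n : ℕ, ((stabState (tgtZ d) (BoxZ d n) I (σ0, fun _ => 0)).2 x : ℕ∞)

/-- The limiting stable configuration `Stab σ = lim_{V ↗ ℤ^d} Stab_V σ` (the eventual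
value of `Stab_{V_n} σ` at `x` along the boxes; it exists a.s. on the fixation event). -/
noncomputable def stabLimitZ (d : ℕ) (I : Stacks (SiteZ d) (Dir d))
    (σ0 : Config (SiteZ d)) (x : SiteZ d) : SiteState :=
  Classical.epsilon fun st =>
    ∀ᶠ n in atTop, (stabState (tgtZ d) (BoxZ d n) I (σ0, fun _ => 0)).1 x = st

/-- Translation of configurations of `ℤ^d` by `v`. -/
def shiftZ (d : ℕ) {α : Type} (v : SiteZ d) (σ : SiteZ d → α) : SiteZ d → α :=
  fun x => σ (x + v)

/-- A measure on configurations of `ℤ^d` is translation-ergodic if it is invariant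
under all translations and every translation-invariant measurable set is trivial. -/
structure IsTransErgodicZ (d : ℕ) {α : Type} [MeasurableSpace α]
    (μ : Measure (SiteZ d → α)) : Prop where
  invariant : ∀ v : SiteZ d, μ.map (shiftZ d v) = μ
  ergodic : ∀ A : Set (SiteZ d → α), MeasurableSet A →
    (∀ v : SiteZ d, shiftZ d v ⁻¹' A = A) → μ A = 0 ∨ μ A = 1

/-- `ASFixates d lam ρ`: every ARW system on `ℤ^d` with sleep rate `lam` started from
a translation-ergodic active configuration with mean `ρ`, independent of the
instruction stacks, almost surely fixates (in the sense that every site has a finite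
odometer, which by Rolla–Tournier is equivalent to particle fixation). -/
def ASFixates (d : ℕ) (lam ρ : ℝ) : Prop :=
  ∀ (Ω : Type) (_ : MeasurableSpace Ω) (P : Measure Ω), IsProbabilityMeasure P →
    ∀ (I : Ω → Stacks (SiteZ d) (Dir d)) (η : Ω → SiteZ d → ℕ),
      IsARWStacks lam P I → Measurable η → IndepFun η I P →
      IsTransErgodicZ d (P.map η) →
      (∫⁻ ω, (η ω (originZ d) : ℝ≥0∞) ∂P) = ENNReal.ofReal ρ →
      P {ω | ∀ x, mOdomZ d (I ω) (activeConfig (η ω)) x < ⊤} = 1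

/-- The critical density `ρ_c(ℤ^d, λ)` of activated random walk on `ℤ^d`. -/
noncomputable def criticalDensity (d : ℕ) (lam : ℝ) : ℝ :=
  sSup {ρ : ℝ | 0 ≤ ρ ∧ ASFixates d lam ρ}

/-- `E[R(ℤ^d)]`: expected returns to the origin of simple random walk on `ℤ^d`. -/
noncomputable def expReturnsZ (d : ℕ) : ℝ≥0∞ :=
  expReturns (tgtZ d) (originZ d)

end ARW

/-!
The number of particles at the origin minus `J₀` of the odometer never increases under
toppling, since a particle reaches the origin only by consuming a jump-to-origin instruction
at a neighbour. A jump-out empties the origin without changing `J₀`, so each iteration that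
leaves the origin occupied again (every one but the last) consumes such an instruction.
-/

lemma add_sub_one_le_of_succ_add_le {a c : ℕ → ℕ} {n : ℕ}
    (hstep : ∀ k < n, c (k + 1) + a k ≤ a (k + 1)) (hc : ∀ k < n, 1 ≤ c k) :
    a 0 + (n - 1) ≤ a n := by
  have h : ∀ k < n, a 0 + k ≤ a k := by
    intro k
    induction k with
    | zero => simp
    | succ k ih =>
      intro hk
      have := hstep k (by omega)
      have := hc (k + 1) hk
      have := ih (by omega)
      omega
  cases n with
  | zero => simp
  | succ n =>
    have := hstep n (by omega)
    have := h n (by omega)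
    simp only [Nat.add_sub_cancel]
    omega

namespace ARW

lemma SiteState.count_addActive (st : SiteState) : st.addActive.count = st.count + 1 := by
  cases st <;> rfl

lemma SiteState.count_le_one_of_numActive_lt_two {st : SiteState} (h : st.numActive < 2) :
    st.count ≤ 1 := by
  cases st with
  | num n => exact Nat.le_of_lt_succ h
  | sleepy => exact le_rfl

section Toppling

variable {X L : Type} [DecidableEq X] {tgt : X → L → X} {V : Finset X} {I : Stacks X L}
  {x y : X} {l : L} {s : ARWState X}

lemma toppleAt_snd : (toppleAt tgt V I x s).2 = Function.update s.2 x (s.2 x + 1) := rfl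

lemma count_toppleAt_of_sleep (h : I x (s.2 x) = .sleep) (y : X) :
    ((toppleAt tgt V I x s).1 y).count = (s.1 y).count := by
  simp only [toppleAt, h]
  split_ifs with h1
  · rcases eq_or_ne y x with rfl | hy
    · rw [Function.update_self, h1]; rfl
    · rw [Function.update_of_ne hy]
  · rfl

lemma count_toppleAt_of_jump_le (h : I x (s.2 x) = .jump l) (y : X) :
    ((toppleAt tgt V I x s).1 y).count ≤ (s.1 y).count + 1 := by
  simp only [toppleAt, h]
  split_ifs with hV
  · rcases eq_or_ne y (tgt x l) with rfl | hy
    · rw [Function.update_self, SiteState.count_addActive]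
      rcases eq_or_ne (tgt x l) x with hx | hx
      · rw [hx, Function.update_self]; simp [SiteState.count]
      · rw [Function.update_of_ne hx]
    · rw [Function.update_of_ne hy]
      rcases eq_or_ne y x with rfl | hx
      · simp [SiteState.count]; omega
      · rw [Function.update_of_ne hx]; omega
  · rcases eq_or_ne y x with rfl | hx
    · simp [SiteState.count]; omega
    · rw [Function.update_of_ne hx]; omega

lemma count_toppleAt_of_jump_of_ne (h : I x (s.2 x) = .jump l) (hx : y ≠ x)
    (hy : y ≠ tgt x l) :
    ((toppleAt tgt V I x s).1 y).count = (s.1 y).count := by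
  simp only [toppleAt, h]
  split_ifs <;> simp [Function.update_of_ne hx, Function.update_of_ne hy]

lemma count_toppleAt_self_of_jump (h : I x (s.2 x) = .jump l) (hx : tgt x l ≠ x) :
    ((toppleAt tgt V I x s).1 x).count = (s.1 x).count - 1 := by
  simp only [toppleAt, h]
  split_ifs <;> simp [Function.update_of_ne hx.symm, SiteState.count]

end Toppling

section StrongStabilization

variable {X L : Type} [DecidableEq X] {tgt : X → L → X} {o : X} {V : Finset X}
  {I : Stacks X L} {s s0 : ARWState X}

lemma jumpOut_snd_of_ne {x : X} (hx : x ≠ o) : (jumpOut tgt o V I s).2 x = s.2 x := by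
  simp [jumpOut, toppleAt_snd, Function.update_of_ne hx]

lemma count_jumpOut (hjump : ∃ ℓ, s.2 o ≤ ℓ ∧ I o ℓ ≠ .sleep) (hloop : ∀ l, tgt o l ≠ o) :
    ((jumpOut tgt o V I s).1 o).count = (s.1 o).count - 1 := by
  set ℓ := sInf {k | s.2 o ≤ k ∧ I o k ≠ Instr.sleep}
  have hℓ : I o ℓ ≠ .sleep := (Nat.sInf_mem hjump).2
  obtain ⟨l, hl⟩ : ∃ l, I o ℓ = .jump l := by
    cases h : I o ℓ with
    | sleep => exact absurd h hℓ
    | jump l => exact ⟨l, rfl⟩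
  exact count_toppleAt_self_of_jump (s := (s.1, Function.update s.2 o ℓ))
    (by simpa using hl) (hloop l)

lemma weakStabState_spec (hws : WeakStabilizable tgt V {o} I) (s : ARWState X) :
    Reach tgt V I (weakElig {o}) s (weakStabState tgt V {o} I s) ∧
      IsWeaklyStable V {o} (weakStabState tgt V {o} I s).1 :=
  Classical.epsilon_spec (hws s)

lemma isWeaklyStable_strongSeq (hws : WeakStabilizable tgt V {o} I) (k : ℕ) :
    IsWeaklyStable V {o} (strongSeq tgt o V I s0 k).1 := by
  induction k with
  | zero => exact (weakStabState_spec hws s0).2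
  | succ k ih =>
    rw [strongSeq]
    split_ifs
    · exact ih
    · exact (weakStabState_spec hws _).2

lemma count_strongSeq_le_one (hws : WeakStabilizable tgt V {o} I) (ho : o ∈ V) (k : ℕ) :
    ((strongSeq tgt o V I s0 k).1 o).count ≤ 1 := by
  have h := isWeaklyStable_strongSeq hws (s0 := s0) k o ho
  simp only [weakElig, Finset.mem_singleton, if_true, not_le] at h
  exact SiteState.count_le_one_of_numActive_lt_two h

lemma strongSeq_succ_of_count_ne_zero {k : ℕ}
    (h : ((strongSeq tgt o V I s0 k).1 o).count ≠ 0) :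
    strongSeq tgt o V I s0 (k + 1) =
      weakStabState tgt V {o} I (jumpOut tgt o V I (strongSeq tgt o V I s0 k)) := by
  rw [strongSeq, if_neg h]

lemma count_strongSeq_ne_zero_of_lt_Ch {σ0 : Config X} {k : ℕ} (hk : k < Ch tgt o V I σ0) :
    ((strongSeq tgt o V I (σ0, fun _ => 0) k).1 o).count ≠ 0 :=
  Nat.notMem_of_lt_sInf (s := {k | ((strongSeq tgt o V I (σ0, fun _ => 0) k).1 o).count = 0}) hk

end StrongStabilization

section Lattice

variable {d : ℕ}

lemma stepDir_ne_origin (p : Dir d) : stepDir d p ≠ originZ d := by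
  intro h
  have h1 := congrFun h p.1
  simp only [stepDir, originZ, Pi.single_eq_same, Pi.zero_apply] at h1
  split at h1 <;> omega

lemma tgtZ_origin_ne (l : Dir d) : tgtZ d (originZ d) l ≠ originZ d := by
  simpa [tgtZ, originZ] using stepDir_ne_origin l

lemma eq_stepDir_of_tgtZ_eq_origin {x : SiteZ d} {l : Dir d} (h : tgtZ d x l = originZ d) :
    x = stepDir d (l.1, !l.2) := by
  have hx : x = -stepDir d l := eq_neg_of_add_eq_zero_left h
  cases hb : l.2 <;> simp [hx, stepDir, hb, ← Pi.single_neg]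

variable (I : Stacks (SiteZ d) (Dir d))

lemma J0Z_mono : Monotone (J0Z d I) := fun _ _ h =>
  Finset.sum_le_sum fun _ _ => Finset.card_le_card <|
    Finset.filter_subset_filter _ (Finset.range_subset_range.2 (h _))

lemma J0Z_congr_of_eq_off_origin {m m' : SiteZ d → ℕ} (h : ∀ x ≠ originZ d, m x = m' x) :
    J0Z d I m = J0Z d I m' :=
  Finset.sum_congr rfl fun p _ => by rw [h _ (stepDir_ne_origin p)]

lemma J0Z_lt_update_of_jump_to_origin {m : SiteZ d → ℕ} {x : SiteZ d} {l : Dir d}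
    (hI : I x (m x) = .jump l) (hx : tgtZ d x l = originZ d) :
    J0Z d I m < J0Z d I (Function.update m x (m x + 1)) := by
  have hle : m ≤ Function.update m x (m x + 1) :=
    le_update_iff.2 ⟨Nat.le_succ _, fun _ _ => le_rfl⟩
  obtain rfl := eq_stepDir_of_tgtZ_eq_origin hx
  refine Finset.sum_lt_sum (fun p _ => Finset.card_le_card <|
      Finset.filter_subset_filter _ (Finset.range_subset_range.2 (hle _)))
    ⟨(l.1, !l.2), Finset.mem_univ _, Finset.card_lt_card ?_⟩
  refine (Finset.ssubset_iff_of_subset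
    (Finset.filter_subset_filter _ (Finset.range_subset_range.2 (hle _)))).2
    ⟨m (stepDir d (l.1, !l.2)), ?_, by simp⟩
  simp [hI]

end Lattice

section Potential

variable {d : ℕ} {V : Finset (SiteZ d)} {I : Stacks (SiteZ d) (Dir d)}

lemma count_toppleAt_add_J0Z_le (x : SiteZ d) (s : ARWState (SiteZ d)) :
    ((toppleAt (tgtZ d) V I x s).1 (originZ d)).count + J0Z d I s.2
      ≤ (s.1 (originZ d)).count + J0Z d I (toppleAt (tgtZ d) V I x s).2 := by
  have hJ : J0Z d I s.2 ≤ J0Z d I (toppleAt (tgtZ d) V I x s).2 :=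
    J0Z_mono I (le_update_iff.2 ⟨Nat.le_succ _, fun _ _ => le_rfl⟩)
  cases hI : I x (s.2 x) with
  | sleep =>
    rw [count_toppleAt_of_sleep hI]
    omega
  | jump l =>
    by_cases hxo : x = originZ d
    · subst hxo
      rw [count_toppleAt_self_of_jump hI (tgtZ_origin_ne l)]
      omega
    by_cases hto : tgtZ d x l = originZ d
    · have := count_toppleAt_of_jump_le (tgt := tgtZ d) (V := V) hI (originZ d)
      have := J0Z_lt_update_of_jump_to_origin I hI hto
      rw [toppleAt_snd]
      omega
    · rw [count_toppleAt_of_jump_of_ne hI (Ne.symm hxo) (Ne.symm hto)]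
      omega

lemma count_add_J0Z_le_of_reach {elig : SiteZ d → SiteState → Prop} {s t : ARWState (SiteZ d)}
    (h : Reach (tgtZ d) V I elig s t) :
    (t.1 (originZ d)).count + J0Z d I s.2 ≤ (s.1 (originZ d)).count + J0Z d I t.2 := by
  induction h with
  | refl => exact le_rfl
  | @tail u _ _ hstep ih =>
    obtain ⟨x, -, -, rfl⟩ := hstep
    have := count_toppleAt_add_J0Z_le (V := V) (I := I) x u
    omega

lemma count_strongSeq_succ_add_J0Z_le (hws : WeakStabilizable (tgtZ d) V {originZ d} I)
    (hV : originZ d ∈ V) (hjumps : ∀ k : ℕ, ∃ ℓ, k ≤ ℓ ∧ I (originZ d) ℓ ≠ Instr.sleep)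
    {σ0 : Config (SiteZ d)} {k : ℕ} (hk : k < Ch (tgtZ d) (originZ d) V I σ0) :
    let S := strongSeq (tgtZ d) (originZ d) V I (σ0, fun _ => 0)
    ((S (k + 1)).1 (originZ d)).count + J0Z d I (S k).2 ≤ J0Z d I (S (k + 1)).2 := by
  intro S
  have hne : ((S k).1 (originZ d)).count ≠ 0 := count_strongSeq_ne_zero_of_lt_Ch hk
  have hone : ((S k).1 (originZ d)).count = 1 :=
    le_antisymm (count_strongSeq_le_one hws hV k) (Nat.pos_of_ne_zero hne)
  set u := jumpOut (tgtZ d) (originZ d) V I (S k)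
  have hu : (u.1 (originZ d)).count = 0 := by
    rw [count_jumpOut (hjumps _) tgtZ_origin_ne, hone]
  have hJu : J0Z d I u.2 = J0Z d I (S k).2 :=
    J0Z_congr_of_eq_off_origin I fun _ hx => jumpOut_snd_of_ne hx
  have hreach : Reach (tgtZ d) V I (weakElig {originZ d}) u (S (k + 1)) := by
    rw [show S (k + 1) = _ from strongSeq_succ_of_count_ne_zero hne]
    exact (weakStabState_spec hws u).1
  have := count_add_J0Z_le_of_reach hreach
  omega

end Potential

theorem additional_chances_le_jumps_to_origin_general (d : ℕ)
    (I : Stacks (SiteZ d) (Dir d)) (V : Finset (SiteZ d)) (hV : originZ d ∈ V)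
    (σ : SiteZ d → ℕ)
    (hws : WeakStabilizable (tgtZ d) V {originZ d} I)
    (hjumps : ∀ k : ℕ, ∃ ℓ, k ≤ ℓ ∧ I (originZ d) ℓ ≠ Instr.sleep) :
    AChZ d V I (activeConfig σ)
      ≤ J0Z d I (strongOdomZ d V I (activeConfig σ))
          - J0Z d I (weakOdom0Z d V I (activeConfig σ)) :=
  Nat.le_sub_of_add_le' <| add_sub_one_le_of_succ_add_le
    (fun _ hk => count_strongSeq_succ_add_J0Z_le hws hV hjumps hk)
    (fun _ hk => Nat.pos_of_ne_zero (count_strongSeq_ne_zero_of_lt_Ch hk))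

/-- **Equation (4.2) (deterministic).**  For every realization `I` of the instruction
stacks (for which the weak stabilizations occurring in the strong stabilization
procedure are defined and the stack at the origin holds infinitely many jump
instructions), `ACh(σ, V) ≤ J₀(m_S) - J₀(m_{W,0})`, where `m_S` is the strong
stabilizing odometer, `m_{W,0}` is the odometer of the initial weak stabilization,
and `J₀(m)` counts the jump instructions to the origin used under `m` at the
neighbours of the origin. -/
theorem additional_chances_le_jumps_to_origin (d : ℕ) (hd : 1 ≤ d)
    (I : Stacks (SiteZ d) (Dir d)) (V : Finset (SiteZ d)) (hV : originZ d ∈ V)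
    (σ : SiteZ d → ℕ)
    (hws : WeakStabilizable (tgtZ d) V {originZ d} I)
    (hjumps : ∀ k : ℕ, ∃ ℓ, k ≤ ℓ ∧ I (originZ d) ℓ ≠ Instr.sleep) :
    AChZ d V I (activeConfig σ)
      ≤ J0Z d I (strongOdomZ d V I (activeConfig σ))
          - J0Z d I (weakOdom0Z d V I (activeConfig σ)) :=
  additional_chances_le_jumps_to_origin_general d I V hV σ hws hjumps

end ARW
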